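/- arXiv:1803.09086 — 4 statements merged into one kernel-verified Lean document; each statement's English description precedes it below -/
import Mathlib

section
/- There exists a constant β > 0 depending only on α̂ and M̂ such that for every continuously differentiable z : [0,T] → E that is not identically zero, there exist a continuous y : [0,T] → E and ỹ ∈ E with ‖(y,ỹ)‖_Y > 0 and B(z,(y,ỹ)) ≥ β ‖z‖_X ‖(y,ỹ)‖_Y. (This is the inf-sup condition of Theorem 4 for the space-time Nitsche form B_{ε,h}, in its abstract finite-dimensional form; the test pair may be taken as y(t) = A(t)⁻¹(z'(t)) + δ z(t) and ỹ = δ z(0) with δ = α̂⁻⁴M̂⁴, where A(t) : E → E is the linear map with ⟪A(t)w,v⟫ = a(t;w,v).) -/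
open scoped RealInnerProductSpace

/-- The dual norm `N'(v) = sup_{0 ≠ w} ⟪v,w⟫ / N(w)` associated with a norm `N`. -/
noncomputable def dualNorm {E : Type*} [NormedAddCommGroup E] [InnerProductSpace ℝ E]
    (N : E → ℝ) (v : E) : ℝ :=
  ⨆ w : {w : E // w ≠ 0}, ⟪v, (w : E)⟫ / N (w : E)

/-- The norm `‖z‖_X` with `‖z‖_X² = ∫₀ᵀ (N(z(t))² + N'(z'(t))²) dt + ‖z(0)‖²`. -/
noncomputable def normX {E : Type*} [NormedAddCommGroup E] [InnerProductSpace ℝ E]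
    (N : E → ℝ) (T : ℝ) (z : ℝ → E) : ℝ :=
  Real.sqrt ((∫ t in (0:ℝ)..T, (N (z t) ^ 2 + dualNorm N (deriv z t) ^ 2)) + ‖z 0‖ ^ 2)

/-- The norm `‖(y,yE)‖_Y` with `‖(y,yE)‖_Y² = ∫₀ᵀ N(y(t))² dt + ‖yE‖²`. -/
noncomputable def normY {E : Type*} [NormedAddCommGroup E] [InnerProductSpace ℝ E]
    (N : E → ℝ) (T : ℝ) (y : ℝ → E) (yE : E) : ℝ :=
  Real.sqrt ((∫ t in (0:ℝ)..T, N (y t) ^ 2) + ‖yE‖ ^ 2)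

/-- The space-time form `B(z,(y,yE)) = ∫₀ᵀ (⟪z'(t),y(t)⟫ + a(t;z(t),y(t))) dt + ⟪z(0),yE⟫`. -/
noncomputable def Bform {E : Type*} [NormedAddCommGroup E] [InnerProductSpace ℝ E]
    (a : ℝ → E →ₗ[ℝ] E →ₗ[ℝ] ℝ) (T : ℝ) (z y : ℝ → E) (yE : E) : ℝ :=
  (∫ t in (0:ℝ)..T, (⟪deriv z t, y t⟫ + a t (z t) (y t))) + ⟪z 0, yE⟫

/-!
Test with `y = z' + δ z` and `ỹ = δ z(0)`, where `δ = κ²/α̂`, `κ = M̂ c₂` and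
`c₁ ‖·‖ ≤ N ≤ c₂ ‖·‖` (all norms on a finite-dimensional space are equivalent). Since
`∫ ⟪z', z⟫ = (‖z(T)‖² - ‖z(0)‖²)/2`, Young's inequality on `a(t; z, z')` and coercivity of
`δ a(t; z, z)` bound `B(z,(y,ỹ))` from below by a multiple of `S = ∫ ‖z'‖² + ∫ N(z)² + ‖z(0)‖²`.
Conversely `N' ≤ ‖·‖ / c₁` gives `‖z‖_X² ≲ S`, and the triangle inequality
gives `‖(y,ỹ)‖_Y² ≲ S`. Finally `‖(y,ỹ)‖_Y > 0`, as otherwise `y` vanishes on `[0,T]` and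
`ỹ = 0`, forcing `B(z,(y,ỹ)) = 0 < c S`.
-/

open Set

section Homogeneous

variable {E : Type*} [AddCommGroup E] [Module ℝ E] {N : E → ℝ}

theorem convexOn_univ_of_subadditive_of_homogeneous
    (hNsmul : ∀ (c : ℝ) (x : E), N (c • x) = |c| * N x)
    (hNtri : ∀ x y : E, N (x + y) ≤ N x + N y) : ConvexOn ℝ univ N := by
  refine ⟨convex_univ, fun x _ y _ s r hs hr _ => ?_⟩
  calc N (s • x + r • y) ≤ N (s • x) + N (r • y) := hNtri _ _
    _ = s • N x + r • N y := by rw [hNsmul, hNsmul, abs_of_nonneg hs, abs_of_nonneg hr]; rfl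

theorem nonneg_of_subadditive_of_homogeneous
    (hNsmul : ∀ (c : ℝ) (x : E), N (c • x) = |c| * N x)
    (hNtri : ∀ x y : E, N (x + y) ≤ N x + N y) (x : E) : 0 ≤ N x := by
  have h := hNtri x (-x)
  have h0 : N 0 = 0 := by simpa using hNsmul 0 x
  have hneg : N (-x) = N x := by simpa using hNsmul (-1) x
  rw [add_neg_cancel, h0, hneg] at h
  linarith

end Homogeneous

section NormEquiv

variable {E : Type*} [NormedAddCommGroup E] [NormedSpace ℝ E] {N : E → ℝ}

theorem eq_norm_mul_of_homogeneous (hNsmul : ∀ (c : ℝ) (x : E), N (c • x) = |c| * N x)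
    {v : E} (hv : v ≠ 0) : N v = ‖v‖ * N (‖v‖⁻¹ • v) := by
  rw [hNsmul, abs_of_nonneg (by positivity), ← mul_assoc,
    mul_inv_cancel₀ (norm_ne_zero_iff.mpr hv), one_mul]

variable [FiniteDimensional ℝ E]

theorem continuous_of_subadditive_of_homogeneous
    (hNsmul : ∀ (c : ℝ) (x : E), N (c • x) = |c| * N x)
    (hNtri : ∀ x y : E, N (x + y) ≤ N x + N y) : Continuous N :=
  (convexOn_univ_of_subadditive_of_homogeneous hNsmul hNtri).locallyLipschitz.continuous

theorem exists_pos_mul_norm_le_le_mul_norm [Nontrivial E]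
    (hN0 : ∀ x, N x = 0 ↔ x = 0) (hNsmul : ∀ (c : ℝ) (x : E), N (c • x) = |c| * N x)
    (hNtri : ∀ x y : E, N (x + y) ≤ N x + N y) :
    ∃ c₁ > 0, ∃ c₂ > 0, ∀ v : E, c₁ * ‖v‖ ≤ N v ∧ N v ≤ c₂ * ‖v‖ := by
  have hcont := (continuous_of_subadditive_of_homogeneous hNsmul hNtri).continuousOn
    (s := Metric.sphere 0 1)
  have hne : (Metric.sphere (0 : E) 1).Nonempty := NormedSpace.sphere_nonempty.mpr zero_le_one
  obtain ⟨u₁, hu₁, hmin⟩ := (isCompact_sphere (0 : E) 1).exists_isMinOn hne hcont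
  obtain ⟨u₂, -, hmax⟩ := (isCompact_sphere (0 : E) 1).exists_isMaxOn hne hcont
  have hpos : 0 < N u₁ := by
    refine (nonneg_of_subadditive_of_homogeneous hNsmul hNtri u₁).lt_of_ne fun h => ?_
    rw [eq_comm, hN0] at h
    simp [h] at hu₁
  refine ⟨N u₁, hpos, N u₂, hpos.trans_le (hmax hu₁), fun v => ?_⟩
  rcases eq_or_ne v 0 with rfl | hv
  · simp [(hN0 0).mpr rfl]
  have hu : ‖v‖⁻¹ • v ∈ Metric.sphere (0 : E) 1 := by
    simp [norm_smul, inv_mul_cancel₀ (norm_ne_zero_iff.mpr hv)]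
  rw [eq_norm_mul_of_homogeneous hNsmul hv, mul_comm (N u₁), mul_comm (N u₂)]
  exact ⟨by gcongr; exact hmin hu, by gcongr; exact hmax hu⟩

end NormEquiv

section DualNorm

variable {E : Type*} [NormedAddCommGroup E] [InnerProductSpace ℝ E] {N : E → ℝ} {c₁ : ℝ}

theorem inner_div_le_norm_div (hc₁ : 0 < c₁) (hlb : ∀ v : E, c₁ * ‖v‖ ≤ N v) (v : E)
    {w : E} (hw : w ≠ 0) : ⟪v, w⟫ / N w ≤ ‖v‖ / c₁ := by
  have hNw : 0 < N w := (mul_pos hc₁ (norm_pos_iff.mpr hw)).trans_le (hlb w)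
  rw [div_le_div_iff₀ hNw hc₁]
  calc ⟪v, w⟫ * c₁ ≤ ‖v‖ * ‖w‖ * c₁ := by gcongr; exact real_inner_le_norm v w
    _ ≤ ‖v‖ * N w := by rw [mul_assoc, mul_comm ‖w‖]; gcongr; exact hlb w

theorem bddAbove_range_inner_div (hc₁ : 0 < c₁) (hlb : ∀ v : E, c₁ * ‖v‖ ≤ N v) (v : E) :
    BddAbove (range fun w : {w : E // w ≠ 0} => ⟪v, (w : E)⟫ / N w) :=
  ⟨‖v‖ / c₁, by rintro _ ⟨w, rfl⟩; exact inner_div_le_norm_div hc₁ hlb v w.2⟩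

variable [Nontrivial E]

theorem dualNorm_le (hc₁ : 0 < c₁) (hlb : ∀ v : E, c₁ * ‖v‖ ≤ N v) (v : E) :
    dualNorm N v ≤ ‖v‖ / c₁ :=
  have : Nonempty {w : E // w ≠ 0} := nonempty_subtype.mpr (exists_ne 0)
  ciSup_le fun w => inner_div_le_norm_div hc₁ hlb v w.2

theorem dualNorm_nonneg (hc₁ : 0 < c₁) (hlb : ∀ v : E, c₁ * ‖v‖ ≤ N v) (v : E) :
    0 ≤ dualNorm N v := by
  obtain ⟨w, hw⟩ := exists_ne (0 : E)
  have hterm : ∀ u : {u : E // u ≠ 0}, 0 ≤ ⟪v, (u : E)⟫ → 0 ≤ dualNorm N v := fun u hu =>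
    (div_nonneg hu ((mul_nonneg hc₁.le (norm_nonneg _)).trans (hlb u))).trans
      (le_ciSup (bddAbove_range_inner_div hc₁ hlb v) u)
  rcases le_total 0 ⟪v, w⟫ with h | h
  · exact hterm ⟨w, hw⟩ h
  · exact hterm ⟨-w, neg_ne_zero.mpr hw⟩ (by rw [inner_neg_right]; linarith)

theorem dualNorm_sq_le (hc₁ : 0 < c₁) (hlb : ∀ v : E, c₁ * ‖v‖ ≤ N v) (v : E) :
    dualNorm N v ^ 2 ≤ c₁⁻¹ ^ 2 * ‖v‖ ^ 2 := by
  rw [← mul_pow, ← div_eq_inv_mul]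
  exact pow_le_pow_left₀ (dualNorm_nonneg hc₁ hlb v) (dualNorm_le hc₁ hlb v) 2

end DualNorm

theorem LinearMap.continuousOn_apply₂ {E : Type*} [NormedAddCommGroup E] [NormedSpace ℝ E]
    [FiniteDimensional ℝ E] {X : Type*} [TopologicalSpace X] {s : Set X}
    (a : X → E →ₗ[ℝ] E →ₗ[ℝ] ℝ) (ha : ∀ w v : E, ContinuousOn (fun t => a t w v) s)
    {f g : X → E} (hf : ContinuousOn f s) (hg : ContinuousOn g s) :
    ContinuousOn (fun t => a t (f t) (g t)) s := by
  let b := Module.finBasis ℝ E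
  have hexpand : ∀ t, a t (f t) (g t) =
      ∑ i, ∑ j, b.equivFun (f t) i * b.equivFun (g t) j * a t (b i) (b j) := fun t => by
    conv_lhs => rw [← b.sum_equivFun (f t), ← b.sum_equivFun (g t)]
    simp only [map_sum, map_smul, LinearMap.sum_apply, LinearMap.smul_apply,
      smul_eq_mul, Finset.mul_sum]
    rw [Finset.sum_comm]
    exact Finset.sum_congr rfl fun i _ => Finset.sum_congr rfl fun j _ => by ring
  have hcoord : ∀ i, Continuous fun x : E => b.equivFun x i := fun i =>
    (continuous_apply i).comp (LinearMap.continuous_of_finiteDimensional _)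
  refine ContinuousOn.congr ?_ fun t _ => hexpand t
  fun_prop (disch := assumption)

theorem integral_inner_deriv_self {E : Type*} [NormedAddCommGroup E] [InnerProductSpace ℝ E]
    {z : ℝ → E} (hz : ContDiff ℝ 1 z) (T : ℝ) :
    ∫ t in (0 : ℝ)..T, ⟪deriv z t, z t⟫ = (‖z T‖ ^ 2 - ‖z 0‖ ^ 2) / 2 := by
  have hderiv : ∀ t, HasDerivAt (fun s => ‖z s‖ ^ 2) (2 * ⟪z t, deriv z t⟫) t := fun t =>
    ((hz.differentiable one_ne_zero t).hasDerivAt).norm_sq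
  have hz' : Continuous (deriv z) := hz.continuous_deriv le_rfl
  have hint : IntervalIntegrable (fun t => 2 * ⟪z t, deriv z t⟫) MeasureTheory.volume 0 T :=
    Continuous.intervalIntegrable (by fun_prop) _ _
  have := intervalIntegral.integral_eq_sub_of_hasDerivAt (fun t _ => hderiv t) hint
  simp only [intervalIntegral.integral_const_mul, real_inner_comm (deriv z _)] at this ⊢
  linarith

theorem intervalIntegral.integral_sq_nonneg {T : ℝ} (hT : 0 ≤ T) (f : ℝ → ℝ) :
    0 ≤ ∫ t in (0 : ℝ)..T, f t ^ 2 :=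
  intervalIntegral.integral_nonneg hT fun _ _ => sq_nonneg _

section Energy

variable {E : Type*} [NormedAddCommGroup E] [InnerProductSpace ℝ E] {N : E → ℝ} {T : ℝ}
  {z : ℝ → E}

noncomputable def energy (N : E → ℝ) (T : ℝ) (z : ℝ → E) : ℝ :=
  (∫ t in (0 : ℝ)..T, ‖deriv z t‖ ^ 2) + (∫ t in (0 : ℝ)..T, N (z t) ^ 2) + ‖z 0‖ ^ 2

theorem energy_pos (hT : 0 < T) (hN : Continuous N) (hNpos : ∀ v, v ≠ 0 → 0 < N v)
    (hz : Continuous z) {t₀ : ℝ} (ht₀ : t₀ ∈ Icc 0 T) (hzt₀ : z t₀ ≠ 0) :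
    0 < energy N T z := by
  have h₁ := intervalIntegral.integral_sq_nonneg hT.le fun t => ‖deriv z t‖
  have h₂ : 0 < ∫ t in (0 : ℝ)..T, N (z t) ^ 2 :=
    intervalIntegral.integral_pos hT ((hN.comp hz).pow 2).continuousOn
      (fun t _ => sq_nonneg _) ⟨t₀, ht₀, pow_pos (hNpos _ hzt₀) 2⟩
  unfold energy
  positivity

theorem normX_le_sqrt_energy [Nontrivial E] {c₁ : ℝ} (hT : 0 ≤ T) (hc₁ : 0 < c₁)
    (hlb : ∀ v : E, c₁ * ‖v‖ ≤ N v) (hN : Continuous N) (hz : ContDiff ℝ 1 z) :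
    normX N T z ≤ Real.sqrt ((1 + c₁⁻¹ ^ 2) * energy N T z) := by
  have hz' : Continuous (deriv z) := hz.continuous_deriv le_rfl
  have hNz : Continuous fun t => N (z t) ^ 2 := (hN.comp hz.continuous).pow 2
  have hz'sq : Continuous fun t => ‖deriv z t‖ ^ 2 := hz'.norm.pow 2
  have hmono : ∫ t in (0 : ℝ)..T, (N (z t) ^ 2 + dualNorm N (deriv z t) ^ 2) ≤
      ∫ t in (0 : ℝ)..T, (N (z t) ^ 2 + c₁⁻¹ ^ 2 * ‖deriv z t‖ ^ 2) := by
    simp only [intervalIntegral.integral_of_le hT]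
    refine MeasureTheory.integral_mono_of_nonneg (.of_forall fun t => by positivity)
      (hNz.add (continuous_const.mul hz'sq)).integrableOn_Ioc
      (.of_forall fun t => add_le_add le_rfl (dualNorm_sq_le hc₁ hlb _))
  rw [intervalIntegral.integral_add (hNz.intervalIntegrable _ _)
    ((hz'sq.intervalIntegrable _ _).const_mul _), intervalIntegral.integral_const_mul] at hmono
  have h₁ := intervalIntegral.integral_sq_nonneg hT fun t => ‖deriv z t‖
  have h₂ := intervalIntegral.integral_sq_nonneg hT fun t => N (z t)
  unfold normX energy
  gcongr
  nlinarith [mul_nonneg (sq_nonneg c₁⁻¹) h₂, mul_nonneg (sq_nonneg c₁⁻¹) (sq_nonneg ‖z 0‖)]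

theorem normY_le_sqrt_energy {c₂ δ : ℝ} (hT : 0 ≤ T) (hδ : 0 ≤ δ)
    (hNsmul : ∀ (c : ℝ) (x : E), N (c • x) = |c| * N x)
    (hNtri : ∀ x y : E, N (x + y) ≤ N x + N y) (hub : ∀ v : E, N v ≤ c₂ * ‖v‖)
    (hN : Continuous N) (hz : ContDiff ℝ 1 z) :
    normY N T (fun t => deriv z t + δ • z t) (δ • z 0) ≤
      Real.sqrt (2 * (c₂ ^ 2 + δ ^ 2) * energy N T z) := by
  have hz' : Continuous (deriv z) := hz.continuous_deriv le_rfl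
  have hNz : Continuous fun t => N (z t) ^ 2 := (hN.comp hz.continuous).pow 2
  have hz'sq : Continuous fun t => ‖deriv z t‖ ^ 2 := hz'.norm.pow 2
  have hpt : ∀ t, N (deriv z t + δ • z t) ^ 2 ≤
      2 * c₂ ^ 2 * ‖deriv z t‖ ^ 2 + 2 * δ ^ 2 * N (z t) ^ 2 := fun t => by
    have hle : N (deriv z t + δ • z t) ≤ c₂ * ‖deriv z t‖ + δ * N (z t) := by
      calc N (deriv z t + δ • z t) ≤ N (deriv z t) + N (δ • z t) := hNtri _ _
        _ ≤ c₂ * ‖deriv z t‖ + δ * N (z t) := by rw [hNsmul, abs_of_nonneg hδ]; gcongr; exact hub _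
    have hsq := pow_le_pow_left₀ (nonneg_of_subadditive_of_homogeneous hNsmul hNtri _) hle 2
    nlinarith [sq_nonneg (c₂ * ‖deriv z t‖ - δ * N (z t))]
  have hmono : ∫ t in (0 : ℝ)..T, N (deriv z t + δ • z t) ^ 2 ≤
      ∫ t in (0 : ℝ)..T, (2 * c₂ ^ 2 * ‖deriv z t‖ ^ 2 + 2 * δ ^ 2 * N (z t) ^ 2) :=
    intervalIntegral.integral_mono_on hT (Continuous.intervalIntegrable (by fun_prop) _ _)
      (Continuous.intervalIntegrable (by fun_prop) _ _) fun t _ => hpt t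
  rw [intervalIntegral.integral_add ((hz'sq.intervalIntegrable _ _).const_mul _)
    ((hNz.intervalIntegrable _ _).const_mul _),
    intervalIntegral.integral_const_mul, intervalIntegral.integral_const_mul] at hmono
  have h₁ := intervalIntegral.integral_sq_nonneg hT fun t => ‖deriv z t‖
  have h₂ := intervalIntegral.integral_sq_nonneg hT fun t => N (z t)
  have hyE : ‖δ • z 0‖ ^ 2 = δ ^ 2 * ‖z 0‖ ^ 2 := by
    rw [norm_smul, Real.norm_of_nonneg hδ, mul_pow]
  unfold normY energy
  gcongr
  rw [hyE]
  nlinarith [mul_nonneg (sq_nonneg δ) h₁, mul_nonneg (sq_nonneg c₂) h₂,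
    mul_nonneg (add_nonneg (sq_nonneg c₂) (sq_nonneg δ)) (sq_nonneg ‖z 0‖)]

end Energy

section Bform

variable {E : Type*} [NormedAddCommGroup E] [InnerProductSpace ℝ E] {N : E → ℝ} {T : ℝ}
  {z : ℝ → E} {a : ℝ → E →ₗ[ℝ] E →ₗ[ℝ] ℝ}

/-- Young's inequality bounds `-b w u` by `‖u‖²/2 + κ²/2 · N(w)²`; the weight `κ²/α` on the
coercive term pays for the second summand. -/
theorem half_sq_add_le_of_coercive {b : E →ₗ[ℝ] E →ₗ[ℝ] ℝ} {α κ : ℝ} (hα : 0 < α)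
    (hcoer : ∀ v, α * N v ^ 2 ≤ b v v) (hcont : ∀ w v, -b w v ≤ κ * N w * ‖v‖) (u w : E) :
    ‖u‖ ^ 2 / 2 + κ ^ 2 / 2 * N w ^ 2 ≤ ‖u‖ ^ 2 + b w u + κ ^ 2 / α * b w w := by
  have hcross := hcont w u
  have hdiag : κ ^ 2 * N w ^ 2 ≤ κ ^ 2 / α * b w w := by
    calc κ ^ 2 * N w ^ 2 = κ ^ 2 / α * (α * N w ^ 2) := by field_simp
      _ ≤ κ ^ 2 / α * b w w := by gcongr; exact hcoer w
  nlinarith [sq_nonneg (‖u‖ - κ * N w)]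

theorem neg_apply_le_mul_mul_norm (hNsmul : ∀ (c : ℝ) (x : E), N (c • x) = |c| * N x)
    (hNtri : ∀ x y : E, N (x + y) ≤ N x + N y) {c₂ M : ℝ} (hub : ∀ v : E, N v ≤ c₂ * ‖v‖)
    (hM : 0 ≤ M) {b : E →ₗ[ℝ] E →ₗ[ℝ] ℝ} (hb : ∀ w v, b w v ≤ M * N w * N v) (w v : E) :
    -b w v ≤ M * c₂ * N w * ‖v‖ := by
  have hMN : 0 ≤ M * N w := mul_nonneg hM (nonneg_of_subadditive_of_homogeneous hNsmul hNtri w)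
  calc -b w v = b w (-v) := by simp
    _ ≤ M * N w * N (-v) := hb w (-v)
    _ = M * N w * N v := by rw [show N (-v) = N v by simpa using hNsmul (-1) v]
    _ ≤ M * N w * (c₂ * ‖v‖) := mul_le_mul_of_nonneg_left (hub v) hMN
    _ = M * c₂ * N w * ‖v‖ := by ring

theorem Bform_ge_of_coercive [FiniteDimensional ℝ E] {α κ : ℝ} (hT : 0 ≤ T) (hα : 0 < α)
    (hN : Continuous N) (ha : ∀ w v : E, ContinuousOn (fun t => a t w v) (Icc 0 T))
    (hcoer : ∀ t ∈ Icc (0 : ℝ) T, ∀ v, α * N v ^ 2 ≤ a t v v)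
    (hcont : ∀ t ∈ Icc (0 : ℝ) T, ∀ w v, -a t w v ≤ κ * N w * ‖v‖) (hz : ContDiff ℝ 1 z) :
    (∫ t in (0 : ℝ)..T, ‖deriv z t‖ ^ 2) / 2 + κ ^ 2 / 2 * (∫ t in (0 : ℝ)..T, N (z t) ^ 2) +
        κ ^ 2 / α / 2 * ‖z 0‖ ^ 2 ≤
      Bform a T z (fun t => deriv z t + (κ ^ 2 / α) • z t) ((κ ^ 2 / α) • z 0) := by
  set δ := κ ^ 2 / α
  have hz' : Continuous (deriv z) := hz.continuous_deriv le_rfl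
  have hy : Continuous fun t => deriv z t + δ • z t := hz'.add (hz.continuous.const_smul δ)
  have hpt : ∀ t ∈ Icc (0 : ℝ) T,
      ‖deriv z t‖ ^ 2 / 2 + κ ^ 2 / 2 * N (z t) ^ 2 + δ * ⟪deriv z t, z t⟫ ≤
        ⟪deriv z t, deriv z t + δ • z t⟫ + a t (z t) (deriv z t + δ • z t) := fun t ht => by
    have := half_sq_add_le_of_coercive hα (hcoer t ht) (hcont t ht) (deriv z t) (z t)
    rw [inner_add_right, real_inner_smul_right, real_inner_self_eq_norm_sq, map_add, map_smul,
      smul_eq_mul]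
    linarith
  have hmono : ∫ t in (0 : ℝ)..T,
        (‖deriv z t‖ ^ 2 / 2 + κ ^ 2 / 2 * N (z t) ^ 2 + δ * ⟪deriv z t, z t⟫) ≤
      ∫ t in (0 : ℝ)..T,
        (⟪deriv z t, deriv z t + δ • z t⟫ + a t (z t) (deriv z t + δ • z t)) :=
    intervalIntegral.integral_mono_on hT (Continuous.intervalIntegrable (by fun_prop) _ _)
      (ContinuousOn.intervalIntegrable_of_Icc hT ((hz'.inner hy).continuousOn.add
        (LinearMap.continuousOn_apply₂ a ha hz.continuous.continuousOn hy.continuousOn))) hpt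
  rw [intervalIntegral.integral_add (Continuous.intervalIntegrable (by fun_prop) _ _)
      (Continuous.intervalIntegrable (by fun_prop) _ _),
    intervalIntegral.integral_add (Continuous.intervalIntegrable (by fun_prop) _ _)
      (Continuous.intervalIntegrable (by fun_prop) _ _),
    intervalIntegral.integral_div, intervalIntegral.integral_const_mul,
    intervalIntegral.integral_const_mul, integral_inner_deriv_self hz] at hmono
  have hzT : 0 ≤ δ * ‖z T‖ ^ 2 := by positivity
  unfold Bform
  rw [real_inner_smul_right, real_inner_self_eq_norm_sq]
  linarith

theorem energy_le_Bform [FiniteDimensional ℝ E] {α κ : ℝ} (hT : 0 ≤ T) (hα : 0 < α)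
    (hN : Continuous N) (ha : ∀ w v : E, ContinuousOn (fun t => a t w v) (Icc 0 T))
    (hcoer : ∀ t ∈ Icc (0 : ℝ) T, ∀ v, α * N v ^ 2 ≤ a t v v)
    (hcont : ∀ t ∈ Icc (0 : ℝ) T, ∀ w v, -a t w v ≤ κ * N w * ‖v‖) (hz : ContDiff ℝ 1 z) :
    min (1 / 2) (min (κ ^ 2 / 2) (κ ^ 2 / (2 * α))) * energy N T z ≤
      Bform a T z (fun t => deriv z t + (κ ^ 2 / α) • z t) ((κ ^ 2 / α) • z 0) := by
  refine le_trans ?_ (Bform_ge_of_coercive hT hα hN ha hcoer hcont hz)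
  set c := min (1 / 2) (min (κ ^ 2 / 2) (κ ^ 2 / (2 * α)))
  have hc₁ : c ≤ 1 / 2 := min_le_left _ _
  have hc₂ : c ≤ κ ^ 2 / 2 := (min_le_right _ _).trans (min_le_left _ _)
  have hc₃ : c ≤ κ ^ 2 / α / 2 := ((min_le_right _ _).trans (min_le_right _ _)).trans_eq (by ring)
  have h₁ := intervalIntegral.integral_sq_nonneg hT fun t => ‖deriv z t‖
  have h₂ := intervalIntegral.integral_sq_nonneg hT fun t => N (z t)
  unfold energy
  linarith [mul_le_mul_of_nonneg_right hc₁ h₁, mul_le_mul_of_nonneg_right hc₂ h₂,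
    mul_le_mul_of_nonneg_right hc₃ (sq_nonneg ‖z 0‖)]

end Bform

theorem normY_pos_of_Bform_pos {E : Type*} [NormedAddCommGroup E] [InnerProductSpace ℝ E]
    {N : E → ℝ} {T : ℝ} (hT : 0 < T) (hN : Continuous N) (hNpos : ∀ v, v ≠ 0 → 0 < N v)
    {a : ℝ → E →ₗ[ℝ] E →ₗ[ℝ] ℝ} {z y : ℝ → E} (hy : ContinuousOn y (Icc 0 T)) {yE : E}
    (hB : 0 < Bform a T z y yE) : 0 < normY N T y yE := by
  by_contra! hY
  have hsum : (∫ t in (0 : ℝ)..T, N (y t) ^ 2) + ‖yE‖ ^ 2 ≤ 0 :=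
    Real.sqrt_eq_zero'.mp (hY.antisymm (Real.sqrt_nonneg _))
  have hint := intervalIntegral.integral_sq_nonneg hT.le fun t => N (y t)
  have hyE : yE = 0 := by
    rw [← norm_eq_zero]
    nlinarith [norm_nonneg yE]
  have hy0 : ∀ t ∈ Icc 0 T, y t = 0 := by
    by_contra! ⟨t₀, ht₀, hyt₀⟩
    have : 0 < ∫ t in (0 : ℝ)..T, N (y t) ^ 2 :=
      intervalIntegral.integral_pos hT ((hN.comp_continuousOn hy).pow 2)
        (fun t _ => sq_nonneg _) ⟨t₀, ht₀, pow_pos (hNpos _ hyt₀) 2⟩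
    linarith [sq_nonneg ‖yE‖]
  have hB0 : Bform a T z y yE = 0 := by
    rw [Bform, hyE, inner_zero_right, add_zero]
    refine (intervalIntegral.integral_congr fun t ht => ?_).trans intervalIntegral.integral_zero
    rw [uIcc_of_le hT.le] at ht
    simp [hy0 t ht]
  exact hB.ne' hB0

theorem mul_mul_le_of_le_sqrt {c C₁ C₂ S X Y B : ℝ} (hc : 0 ≤ c) (hC₁ : 0 < C₁) (hC₂ : 0 < C₂)
    (hS : 0 ≤ S) (hX : X ≤ Real.sqrt (C₁ * S)) (hY₀ : 0 ≤ Y) (hY : Y ≤ Real.sqrt (C₂ * S))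
    (hB : c * S ≤ B) : c / Real.sqrt (C₁ * C₂) * X * Y ≤ B := by
  have hXY : X * Y ≤ Real.sqrt (C₁ * C₂) * S := by
    calc X * Y ≤ Real.sqrt (C₁ * S) * Real.sqrt (C₂ * S) :=
          mul_le_mul hX hY hY₀ (Real.sqrt_nonneg _)
      _ = Real.sqrt (C₁ * C₂) * S := by
          rw [← Real.sqrt_mul (by positivity), show C₁ * S * (C₂ * S) = C₁ * C₂ * S ^ 2 by ring,
            Real.sqrt_mul (by positivity), Real.sqrt_sq hS]
  have hsqrt : 0 < Real.sqrt (C₁ * C₂) := Real.sqrt_pos.mpr (by positivity)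
  calc c / Real.sqrt (C₁ * C₂) * X * Y = c / Real.sqrt (C₁ * C₂) * (X * Y) := by ring
    _ ≤ c / Real.sqrt (C₁ * C₂) * (Real.sqrt (C₁ * C₂) * S) := by gcongr
    _ = c * S := by field_simp
    _ ≤ B := hB

/-- Theorem 4 (inf-sup condition of `B_{ε,h}`), abstract form: there is `β > 0` such that for
every continuously differentiable `z` not identically zero on `[0,T]` there is a test pair
`(y,ỹ)` with `‖(y,ỹ)‖_Y > 0` and `B(z,(y,ỹ)) ≥ β ‖z‖_X ‖(y,ỹ)‖_Y`. -/
theorem Bform_infSup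
    {E : Type*} [NormedAddCommGroup E] [InnerProductSpace ℝ E]
    [FiniteDimensional ℝ E] [Nontrivial E]
    (N : E → ℝ)
    (hN0 : ∀ x, N x = 0 ↔ x = 0)
    (hNsmul : ∀ (c : ℝ) (x : E), N (c • x) = |c| * N x)
    (hNtri : ∀ x y : E, N (x + y) ≤ N x + N y)
    (T : ℝ) (hT : 0 < T)
    (a : ℝ → E →ₗ[ℝ] E →ₗ[ℝ] ℝ)
    (ha_cont : ∀ w v : E, ContinuousOn (fun t => a t w v) (Set.Icc 0 T))
    (αh Mh : ℝ) (hα : 0 < αh) (hM : 0 < Mh)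
    (hcoer : ∀ t ∈ Set.Icc (0:ℝ) T, ∀ v : E, αh * N v ^ 2 ≤ a t v v)
    (hcont : ∀ t ∈ Set.Icc (0:ℝ) T, ∀ w v : E, a t w v ≤ Mh * N w * N v) :
    ∃ β > 0, ∀ z : ℝ → E, ContDiff ℝ 1 z → (∃ t ∈ Set.Icc (0:ℝ) T, z t ≠ 0) →
      ∃ y : ℝ → E, ContinuousOn y (Set.Icc 0 T) ∧ ∃ yE : E,
        0 < normY N T y yE ∧ β * normX N T z * normY N T y yE ≤ Bform a T z y yE := by
  obtain ⟨c₁, hc₁, c₂, hc₂, hbounds⟩ := exists_pos_mul_norm_le_le_mul_norm hN0 hNsmul hNtri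
  have hN := continuous_of_subadditive_of_homogeneous hNsmul hNtri
  have hNpos : ∀ v, v ≠ 0 → 0 < N v := fun v hv =>
    (mul_pos hc₁ (norm_pos_iff.mpr hv)).trans_le (hbounds v).1
  set κ := Mh * c₂
  set δ := κ ^ 2 / αh
  set c := min (1 / 2) (min (κ ^ 2 / 2) (κ ^ 2 / (2 * αh)))
  have hc : 0 < c := by positivity
  refine ⟨c / Real.sqrt ((1 + c₁⁻¹ ^ 2) * (2 * (c₂ ^ 2 + δ ^ 2))), by positivity, ?_⟩
  rintro z hz ⟨t₀, ht₀, hzt₀⟩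
  have hB := energy_le_Bform hT.le hα hN ha_cont hcoer
    (fun t ht => neg_apply_le_mul_mul_norm hNsmul hNtri (fun v => (hbounds v).2) hM.le
      (hcont t ht)) hz
  have hS := energy_pos hT hN hNpos hz.continuous ht₀ hzt₀
  have hy : Continuous fun t => deriv z t + δ • z t :=
    (hz.continuous_deriv le_rfl).add (hz.continuous.const_smul δ)
  refine ⟨_, hy.continuousOn, _,
    normY_pos_of_Bform_pos hT hN hNpos hy.continuousOn ((mul_pos hc hS).trans_le hB), ?_⟩
  exact mul_mul_le_of_le_sqrt hc.le (by positivity) (by positivity) hS.le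
    (normX_le_sqrt_energy hT.le hc₁ (fun v => (hbounds v).1) hN hz) (Real.sqrt_nonneg _)
    (normY_le_sqrt_energy hT.le (by positivity) hNsmul hNtri (fun v => (hbounds v).2) hN hz) hB
end

section
/- If a continuous function y : [0,T] → E and a vector ỹ ∈ E satisfy B(z,(y,ỹ)) = 0 for every continuously differentiable z : [0,T] → E, then y(t) = 0 for all t ∈ [0,T] and ỹ = 0. (This is the implication (8) established in the proof of Theorem 5, which together with the inf-sup condition yields unique solvability of the semidiscrete Nitsche scheme via the Banach–Nečas–Babuška theorem.) -/
/-!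
Testing `B` against `z = φ • e` shows that each coordinate `⟪e, y⟫` is a weak solution of the
scalar problem `g' = a(·; e, y)`, `g(0) = ⟪e, ỹ⟫`, `g(T) = 0`, hence (du Bois-Reymond) a classical
one. So `y` is differentiable on `(0, T)` with `(‖y‖²)' = 2 a(t; y, y) ≥ 0`: the energy `‖y‖²` is
nondecreasing and vanishes at `T`, which forces `y = 0` on `[0, T]` and then `ỹ = y(0) = 0`.
-/

open scoped RealInnerProductSpace

open intervalIntegral Set MeasureTheory

theorem hasDerivAt_integral_of_continuousOn_Icc {F : Type*} [NormedAddCommGroup F]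
    [NormedSpace ℝ F] [CompleteSpace F] {f : ℝ → F} {a b t : ℝ}
    (hf : ContinuousOn f (Icc a b)) (ht : t ∈ Ioo a b) :
    HasDerivAt (fun u => ∫ s in a..u, f s) (f t) t :=
  integral_hasDerivAt_right
    ((hf.mono (Icc_subset_Icc_right ht.2.le)).intervalIntegrable_of_Icc ht.1.le)
    ((hf.mono Ioo_subset_Icc_self).stronglyMeasurableAtFilter isOpen_Ioo t ht)
    (hf.continuousAt (Icc_mem_nhds ht.1 ht.2))

theorem eqOn_zero_of_forall_integral_deriv_mul_eq_zero {f : ℝ → ℝ} {a b : ℝ} (hab : a < b)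
    (hf : ContinuousOn f (Icc a b))
    (h : ∀ φ : ℝ → ℝ, ContDiff ℝ 1 φ → ∫ t in a..b, deriv φ t * f t = 0) :
    EqOn f 0 (Icc a b) := by
  set f' := IccExtend hab.le ((Icc a b).domRestrict f)
  have hf' : Continuous f' := (continuousOn_iff_continuous_domRestrict.1 hf).Icc_extend'
  -- Test against a primitive of `f`: this turns the hypothesis into `∫ f² = 0`.
  set Φ := fun u => ∫ s in a..u, f' s
  have hΦ : deriv Φ = f' := funext (hf'.deriv_integral _ a)
  have hΦC1 : ContDiff ℝ 1 Φ := contDiff_one_iff_deriv.2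
    ⟨fun t => (hf'.integral_hasStrictDerivAt a t).hasDerivAt.differentiableAt, hΦ ▸ hf'⟩
  have hsq : ∫ t in a..b, f t ^ 2 = 0 := by
    rw [← h Φ hΦC1, hΦ]
    refine integral_congr fun t ht => ?_
    rw [uIcc_of_le hab.le] at ht
    simp [f', IccExtend_of_mem hab.le _ ht, sq]
  intro t ht
  by_contra hft
  exact (integral_pos hab (hf.pow 2) (fun _ _ => sq_nonneg _)
    ⟨t, ht, pow_two_pos_of_ne_zero hft⟩).ne' hsq

theorem hasDerivAt_of_weak_formulation {g h : ℝ → ℝ} {a b c : ℝ} (hab : a < b)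
    (hg : ContinuousOn g (Icc a b)) (hh : ContinuousOn h (Icc a b))
    (hweak : ∀ φ : ℝ → ℝ, ContDiff ℝ 1 φ →
      (∫ t in a..b, (deriv φ t * g t + φ t * h t)) + φ a * c = 0) :
    g a = c ∧ g b = 0 ∧ ∀ t ∈ Ioo a b, HasDerivAt g (h t) t := by
  set H := fun u => c + ∫ s in a..u, h s
  have hH : ContinuousOn H (Icc a b) := by
    have := continuousOn_primitive_interval'
      (hh.intervalIntegrable_of_Icc (μ := volume) hab.le) left_mem_uIcc
    rw [uIcc_of_le hab.le] at this
    exact continuousOn_const.add this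
  have hH' : ∀ t ∈ Ioo a b, HasDerivAt H (h t) t := fun t ht =>
    (hasDerivAt_integral_of_continuousOn_Icc hh ht).const_add c
  have hHb : H b = 0 := by simpa [H, add_comm] using hweak (fun _ => 1) contDiff_const
  have hgH : EqOn g H (Icc a b) := by
    refine fun t ht => sub_eq_zero.1 (eqOn_zero_of_forall_integral_deriv_mul_eq_zero hab
      (hg.sub hH) (fun φ hφ => ?_) ht)
    have hφ' : Continuous (deriv φ) := hφ.continuous_deriv le_rfl
    have hibp : ∫ t in a..b, φ t * h t =
        φ b * H b - φ a * H a - ∫ t in a..b, deriv φ t * H t := by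
      refine integral_mul_deriv_eq_deriv_mul_of_hasDerivAt
        (by simpa [uIcc_of_le hab.le] using hφ.continuous.continuousOn)
        (by simpa [uIcc_of_le hab.le] using hH)
        (fun t _ => (hφ.differentiable one_ne_zero t).hasDerivAt)
        (fun t ht => hH' t (by simpa [hab.le] using ht))
        (hφ'.intervalIntegrable _ _) (hh.intervalIntegrable_of_Icc hab.le)
    have hgi : IntervalIntegrable (fun t => deriv φ t * g t) volume a b :=
      (hφ'.continuousOn.mul hg).intervalIntegrable_of_Icc hab.le
    have hHi : IntervalIntegrable (fun t => deriv φ t * H t) volume a b :=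
      (hφ'.continuousOn.mul hH).intervalIntegrable_of_Icc hab.le
    have hhi : IntervalIntegrable (fun t => φ t * h t) volume a b :=
      (hφ.continuous.continuousOn.mul hh).intervalIntegrable_of_Icc hab.le
    have hHa : H a = c := by simp [H]
    have := hweak φ hφ
    rw [integral_add hgi hhi, hibp, hHb, hHa] at this
    simp only [Pi.sub_apply, mul_sub]
    rw [integral_sub hgi hHi]
    linarith
  refine ⟨by simp [hgH (left_mem_Icc.2 hab.le), H], hgH (right_mem_Icc.2 hab.le) ▸ hHb,
    fun t ht => (hH' t ht).congr_of_eventuallyEq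
      (Filter.eventually_of_mem (Icc_mem_nhds ht.1 ht.2) hgH)⟩

theorem ContinuousOn.linearMap_apply {X E F : Type*} [TopologicalSpace X] [NormedAddCommGroup E]
    [NormedSpace ℝ E] [FiniteDimensional ℝ E] [AddCommGroup F] [Module ℝ F] [TopologicalSpace F]
    [ContinuousAdd F] [ContinuousSMul ℝ F] {ℓ : X → E →ₗ[ℝ] F} {s : Set X}
    (hℓ : ∀ v, ContinuousOn (fun x => ℓ x v) s) {y : X → E} (hy : ContinuousOn y s) :
    ContinuousOn (fun x => ℓ x (y x)) s := by
  let b := Module.finBasis ℝ E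
  have hexp : ∀ x, ℓ x (y x) = ∑ i, b.coord i (y x) • ℓ x (b i) := fun x => by
    conv_lhs => rw [← b.sum_repr (y x)]
    simp only [map_sum, map_smul, b.coord_apply]
  simp_rw [hexp]
  exact continuousOn_finsetSum _ fun i _ =>
    ((LinearMap.continuous_of_finiteDimensional (b.coord i)).comp_continuousOn hy).smul (hℓ _)

theorem Bform_smul_const {E : Type*} [NormedAddCommGroup E] [InnerProductSpace ℝ E]
    (a : ℝ → E →ₗ[ℝ] E →ₗ[ℝ] ℝ) (T : ℝ) {φ : ℝ → ℝ}
    (hφ : Differentiable ℝ φ) (e : E) (y : ℝ → E) (yE : E) :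
    Bform a T (fun t => φ t • e) y yE =
      (∫ t in (0:ℝ)..T, (deriv φ t * ⟪e, y t⟫ + φ t * a t e (y t))) + φ 0 * ⟪e, yE⟫ := by
  have hd : ∀ t, deriv (fun s => φ s • e) t = deriv φ t • e := fun t =>
    deriv_smul_const (hφ t) e
  simp only [Bform, hd, real_inner_smul_left, map_smul, LinearMap.smul_apply, smul_eq_mul]

section InnerProductSpace

variable {E : Type*} [NormedAddCommGroup E] [InnerProductSpace ℝ E] [FiniteDimensional ℝ E]

theorem hasDerivAt_of_forall_hasDerivAt_inner {Y : ℝ → E} {v : E} {t : ℝ}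
    (h : ∀ e, HasDerivAt (fun s => ⟪e, Y s⟫) ⟪e, v⟫ t) : HasDerivAt Y v t := by
  let b := stdOrthonormalBasis ℝ E
  have := HasDerivAt.fun_sum (u := Finset.univ) fun i _ => (h (b i)).smul_const (b i)
  simpa only [b.sum_repr'] using this

theorem hasDerivAt_norm_sq_of_hasDerivAt_inner {Y : ℝ → E} {L : E →ₗ[ℝ] ℝ} {t : ℝ}
    (h : ∀ e, HasDerivAt (fun s => ⟪e, Y s⟫) (L e) t) :
    HasDerivAt (fun s => ‖Y s‖ ^ 2) (2 * L (Y t)) t := by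
  set v := (InnerProductSpace.toDual ℝ E).symm (LinearMap.toContinuousLinearMap L)
  have hv : ∀ e, ⟪e, v⟫ = L e := fun e => by
    rw [real_inner_comm, InnerProductSpace.toDual_symm_apply]; rfl
  have := (hasDerivAt_of_forall_hasDerivAt_inner fun e => hv e ▸ h e).norm_sq
  simpa [hv] using this

theorem eqOn_zero_of_hasDerivAt_inner_of_nonneg {A : ℝ → E →ₗ[ℝ] E →ₗ[ℝ] ℝ} {Y : ℝ → E}
    {a b : ℝ} (hY : ContinuousOn Y (Icc a b)) (hYb : Y b = 0)
    (hderiv : ∀ t ∈ Ioo a b, ∀ e, HasDerivAt (fun s => ⟪e, Y s⟫) (A t e (Y t)) t)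
    (hA : ∀ t ∈ Ioo a b, ∀ v, 0 ≤ A t v v) :
    EqOn Y 0 (Icc a b) := by
  have hmono : MonotoneOn (fun s => ‖Y s‖ ^ 2) (Icc a b) := by
    refine monotoneOn_of_hasDerivWithinAt_nonneg (f' := fun t => 2 * A t (Y t) (Y t))
      (convex_Icc a b) (hY.norm.pow 2)
      (fun t ht => ?_) (fun t ht => ?_) <;> rw [interior_Icc] at ht
    · exact (hasDerivAt_norm_sq_of_hasDerivAt_inner (L := (A t).flip (Y t))
        (hderiv t ht)).hasDerivWithinAt
    · exact mul_nonneg zero_le_two (hA t ht (Y t))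
  intro t ht
  have := hmono ht (right_mem_Icc.2 (ht.1.trans ht.2)) ht.2
  simpa [hYb] using this

end InnerProductSpace

theorem Bform_nondegenerate_general
    {E : Type*} [NormedAddCommGroup E] [InnerProductSpace ℝ E]
    [FiniteDimensional ℝ E]
    (N : E → ℝ)
    (T : ℝ) (hT : 0 < T)
    (a : ℝ → E →ₗ[ℝ] E →ₗ[ℝ] ℝ)
    (ha_cont : ∀ w v : E, ContinuousOn (fun t => a t w v) (Set.Icc 0 T))
    (αh : ℝ) (hα : 0 < αh)
    (hcoer : ∀ t ∈ Set.Icc (0:ℝ) T, ∀ v : E, αh * N v ^ 2 ≤ a t v v)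
    (y : ℝ → E) (hy : ContinuousOn y (Set.Icc 0 T)) (yE : E)
    (hB : ∀ z : ℝ → E, ContDiff ℝ 1 z → Bform a T z y yE = 0) :
    (∀ t ∈ Set.Icc (0:ℝ) T, y t = 0) ∧ yE = 0 := by
  have hweak : ∀ e : E, ⟪e, y 0⟫ = ⟪e, yE⟫ ∧ ⟪e, y T⟫ = 0 ∧
      ∀ t ∈ Ioo 0 T, HasDerivAt (fun s => ⟪e, y s⟫) (a t e (y t)) t := fun e =>
    hasDerivAt_of_weak_formulation hT (continuousOn_const.inner hy)
      (ContinuousOn.linearMap_apply (ha_cont e) hy)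
      fun φ hφ => by
        rw [← Bform_smul_const a T (hφ.differentiable one_ne_zero)]
        exact hB _ (hφ.smul contDiff_const)
  have hy0 : EqOn y 0 (Icc 0 T) :=
    eqOn_zero_of_hasDerivAt_inner_of_nonneg hy
      (ext_inner_left ℝ fun e => by simp [(hweak e).2.1])
      (fun t ht e => (hweak e).2.2 t ht) fun t ht v =>
        (mul_nonneg hα.le (sq_nonneg _)).trans (hcoer t (Ioo_subset_Icc_self ht) v)
  exact ⟨hy0, ext_inner_left ℝ fun e => by
    rw [← (hweak e).1, hy0 (left_mem_Icc.2 hT.le), Pi.zero_apply, inner_zero_right]⟩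

/-- Implication (8) in the proof of Theorem 5: if a continuous `y : [0,T] → E` and `ỹ ∈ E`
satisfy `B(z,(y,ỹ)) = 0` for every continuously differentiable `z : [0,T] → E`, then `y ≡ 0`
on `[0,T]` and `ỹ = 0`. -/
theorem Bform_nondegenerate
    {E : Type*} [NormedAddCommGroup E] [InnerProductSpace ℝ E]
    [FiniteDimensional ℝ E] [Nontrivial E]
    (N : E → ℝ)
    (hN0 : ∀ x, N x = 0 ↔ x = 0)
    (hNsmul : ∀ (c : ℝ) (x : E), N (c • x) = |c| * N x)
    (hNtri : ∀ x y : E, N (x + y) ≤ N x + N y)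
    (T : ℝ) (hT : 0 < T)
    (a : ℝ → E →ₗ[ℝ] E →ₗ[ℝ] ℝ)
    (ha_cont : ∀ w v : E, ContinuousOn (fun t => a t w v) (Set.Icc 0 T))
    (αh Mh : ℝ) (hα : 0 < αh) (hM : 0 < Mh)
    (hcoer : ∀ t ∈ Set.Icc (0:ℝ) T, ∀ v : E, αh * N v ^ 2 ≤ a t v v)
    (hcont : ∀ t ∈ Set.Icc (0:ℝ) T, ∀ w v : E, a t w v ≤ Mh * N w * N v)
    (y : ℝ → E) (hy : ContinuousOn y (Set.Icc 0 T)) (yE : E)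
    (hB : ∀ z : ℝ → E, ContDiff ℝ 1 z → Bform a T z y yE = 0) :
    (∀ t ∈ Set.Icc (0:ℝ) T, y t = 0) ∧ yE = 0 :=
  Bform_nondegenerate_general N T hT a ha_cont αh hα hcoer y hy yE hB
end

section
/- Under the backward Euler error relation, one has ‖ρ_n‖ ≤ √(T/(8α̂)) · τ · W for every n = 0, …, M. (This is the first estimate of Lemma 7.2, bounding the maximal discrete error between the backward Euler solution and the semidiscrete Nitsche solution.) -/
/-!
By `2⟪x - y, x⟫ = ‖x‖² - ‖y‖² + ‖x - y‖²`, the error relation gives, with `ν = N(ρₙ₊₁)`,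
`‖ρₙ₊₁‖² - ‖ρₙ‖² ≤ τ (τ W ν - 2 α̂ ν²) ≤ τ³ W² / (8 α̂)`,
the last step by maximising the quadratic in `ν`. Summing from `ρ₀ = 0` over at most `M` steps
yields `‖ρₙ‖² ≤ M τ³ W² / (8 α̂) = (T / (8 α̂)) τ² W²`.
-/

open scoped RealInnerProductSpace

theorem two_mul_inner_sub_self_eq {F : Type*} [SeminormedAddCommGroup F] [InnerProductSpace ℝ F]
    (x y : F) : 2 * ⟪x - y, x⟫ = ‖x‖ ^ 2 - ‖y‖ ^ 2 + ‖x - y‖ ^ 2 := by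
  rw [norm_sub_sq_real, inner_sub_left, real_inner_self_eq_norm_sq, real_inner_comm]
  ring

theorem mul_sub_mul_sq_le_sq_div {b c s : ℝ} (hc : 0 < c) : b * s - c * s ^ 2 ≤ b ^ 2 / (4 * c) := by
  rw [le_div_iff₀ (by positivity)]
  nlinarith [sq_nonneg (b - 2 * c * s)]

theorem le_nsmul_of_le_add_of_le_zero {α : Type*} [AddCommMonoid α] [PartialOrder α]
    [IsOrderedAddMonoid α] {u : ℕ → α} {C : α} {M : ℕ} (h0 : u 0 ≤ 0)
    (hstep : ∀ n < M, u (n + 1) ≤ u n + C) : ∀ n ≤ M, u n ≤ n • C := by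
  intro n hn
  induction n with
  | zero => simpa using h0
  | succ k ih =>
    calc u (k + 1) ≤ u k + C := hstep k hn
      _ ≤ k • C + C := add_le_add_left (ih (Nat.le_of_succ_le hn)) C
      _ = (k + 1) • C := (succ_nsmul C k).symm

theorem backwardEuler_step_norm_sq_le {E : Type*} [SeminormedAddCommGroup E]
    [InnerProductSpace ℝ E] {x y w : E} {a : E →ₗ[ℝ] E →ₗ[ℝ] ℝ} {τ α W ν : ℝ}
    (hτ : 0 < τ) (hα : 0 < α) (hν : ‖x‖ ≤ ν) (hcoer : α * ν ^ 2 ≤ a x x) (hw : ‖w‖ ≤ W)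
    (hrel : ⟪x - y, x⟫ - τ ^ 2 / 2 * ⟪w, x⟫ + τ * a x x = 0) :
    ‖x‖ ^ 2 ≤ ‖y‖ ^ 2 + τ ^ 3 * W ^ 2 / (8 * α) := by
  have henergy := two_mul_inner_sub_self_eq x y
  have hinner : ⟪w, x⟫ ≤ W * ν :=
    (real_inner_le_norm w x).trans
      (mul_le_mul hw hν (norm_nonneg x) ((norm_nonneg w).trans hw))
  have hquad := mul_sub_mul_sq_le_sq_div (b := τ * W) (s := ν) (by positivity : 0 < 2 * α)
  calc ‖x‖ ^ 2 ≤ ‖y‖ ^ 2 + τ ^ 2 * ⟪w, x⟫ - 2 * τ * a x x := by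
        nlinarith [sq_nonneg ‖x - y‖]
    _ ≤ ‖y‖ ^ 2 + τ * (τ * W * ν - 2 * α * ν ^ 2) := by
        nlinarith [mul_le_mul_of_nonneg_left hinner (sq_nonneg τ),
          mul_le_mul_of_nonneg_left hcoer hτ.le]
    _ ≤ ‖y‖ ^ 2 + τ * ((τ * W) ^ 2 / (4 * (2 * α))) := by gcongr
    _ = ‖y‖ ^ 2 + τ ^ 3 * W ^ 2 / (8 * α) := by ring

theorem backwardEuler_error_max_estimate_general
    {E : Type*} [NormedAddCommGroup E] [InnerProductSpace ℝ E]
    (N : E → ℝ) (hN : ∀ v : E, ‖v‖ ≤ N v)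
    (τ : ℝ) (hτ : 0 < τ) (M : ℕ) (T : ℝ) (hT : T = M * τ)
    (a : ℕ → E →ₗ[ℝ] E →ₗ[ℝ] ℝ) (αh : ℝ) (hα : 0 < αh)
    (hcoer : ∀ n < M, ∀ v : E, αh * N v ^ 2 ≤ a n v v)
    (W : ℝ) (hW : 0 ≤ W)
    (ρ : ℕ → E) (hρ0 : ρ 0 = 0)
    (w : ℕ → E) (hw : ∀ n < M, ‖w n‖ ≤ W)
    (hrel : ∀ n < M,
      ⟪ρ (n + 1) - ρ n, ρ (n + 1)⟫ - τ ^ 2 / 2 * ⟪w n, ρ (n + 1)⟫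
        + τ * a n (ρ (n + 1)) (ρ (n + 1)) = 0) :
    ∀ n ≤ M, ‖ρ n‖ ≤ Real.sqrt (T / (8 * αh)) * τ * W := by
  intro n hn
  have hsum : ‖ρ n‖ ^ 2 ≤ n • (τ ^ 3 * W ^ 2 / (8 * αh)) :=
    le_nsmul_of_le_add_of_le_zero (u := fun k ↦ ‖ρ k‖ ^ 2) (by simp [hρ0])
      (fun k hk ↦ backwardEuler_step_norm_sq_le hτ hα (hN _) (hcoer k hk _) (hw k hk) (hrel k hk))
      n hn
  have hnM : (n : ℝ) ≤ M := by exact_mod_cast hn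
  rw [← sq_le_sq₀ (norm_nonneg _) (by positivity)]
  calc ‖ρ n‖ ^ 2 ≤ n * (τ ^ 3 * W ^ 2 / (8 * αh)) := by rwa [nsmul_eq_mul] at hsum
    _ ≤ M * (τ ^ 3 * W ^ 2 / (8 * αh)) := by gcongr
    _ = (Real.sqrt (T / (8 * αh)) * τ * W) ^ 2 := by
        rw [mul_pow, mul_pow, Real.sq_sqrt (by rw [hT]; positivity), hT]
        ring

/-- Lemma 7.2, first estimate: under the backward Euler error relation, the discrete errors
satisfy `‖ρ_n‖ ≤ √(T/(8α̂)) τ W` for all `n = 0, …, M`. -/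
theorem backwardEuler_error_max_estimate
    {E : Type*} [NormedAddCommGroup E] [InnerProductSpace ℝ E] [FiniteDimensional ℝ E]
    (N : E → ℝ) (hN : ∀ v : E, ‖v‖ ≤ N v)
    (τ : ℝ) (hτ : 0 < τ) (M : ℕ) (hM : 0 < M) (T : ℝ) (hT : T = M * τ)
    (a : ℕ → E →ₗ[ℝ] E →ₗ[ℝ] ℝ) (αh : ℝ) (hα : 0 < αh)
    (hcoer : ∀ n < M, ∀ v : E, αh * N v ^ 2 ≤ a n v v)
    (W : ℝ) (hW : 0 ≤ W)
    (ρ : ℕ → E) (hρ0 : ρ 0 = 0)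
    (w : ℕ → E) (hw : ∀ n < M, ‖w n‖ ≤ W)
    (hrel : ∀ n < M,
      ⟪ρ (n + 1) - ρ n, ρ (n + 1)⟫ - τ ^ 2 / 2 * ⟪w n, ρ (n + 1)⟫
        + τ * a n (ρ (n + 1)) (ρ (n + 1)) = 0) :
    ∀ n ≤ M, ‖ρ n‖ ≤ Real.sqrt (T / (8 * αh)) * τ * W :=
  backwardEuler_error_max_estimate_general N hN τ hτ M T hT a αh hα hcoer W hW ρ hρ0 w hw hrel
end

section
/- Under the backward Euler error relation, one has (Σ_{n=0}^{M−1} τ N(ρ_{n+1})²)^{1/2} ≤ (√T/(2α̂)) · τ · W. (This is the second estimate of Lemma 7.2, bounding the discrete L²(J;V_h)-norm of the error between the backward Euler solution and the semidiscrete Nitsche solution.) -/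
open scoped RealInnerProductSpace

/-!
Testing the error relation with `ρ_{n+1}` gives the energy inequality
`‖ρ_{n+1}‖² - ‖ρ_n‖² + 2α̂τ N(ρ_{n+1})² ≤ τ² W N(ρ_{n+1})`; summing it, the `L²`-terms
telescope away (`ρ_0 = 0`), leaving `2α̂ S ≤ τ W · τ Σ N(ρ_{n+1})` for `S = Σ τ N(ρ_{n+1})²`.
Cauchy–Schwarz bounds the discrete `L¹`-norm `τ Σ N(ρ_{n+1})` by `√(T S)`, and dividing by `√S`
gives the estimate.
-/

open Finset

theorem sq_norm_sub_sq_norm_le_two_mul_inner_sub_left {E : Type*} [NormedAddCommGroup E]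
    [InnerProductSpace ℝ E] (x y : E) : ‖x‖ ^ 2 - ‖y‖ ^ 2 ≤ 2 * ⟪x - y, x⟫ := by
  rw [inner_sub_left, real_inner_self_eq_norm_sq, real_inner_comm]
  nlinarith [norm_sub_sq_real x y, sq_nonneg ‖x - y‖]

theorem backwardEuler_step_energy_le {E : Type*} [NormedAddCommGroup E] [InnerProductSpace ℝ E]
    {x y w : E} {τ α A N W : ℝ} (hτ : 0 ≤ τ) (hW : 0 ≤ W) (hx : ‖x‖ ≤ N) (hw : ‖w‖ ≤ W)
    (hA : α * N ^ 2 ≤ A) (hrel : ⟪x - y, x⟫ - τ ^ 2 / 2 * ⟪w, x⟫ + τ * A = 0) :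
    ‖x‖ ^ 2 - ‖y‖ ^ 2 + 2 * α * (τ * N ^ 2) ≤ τ ^ 2 * W * N := by
  have hwx : ⟪w, x⟫ ≤ W * N :=
    (real_inner_le_norm w x).trans (mul_le_mul hw hx (norm_nonneg x) hW)
  have hforce := mul_le_mul_of_nonneg_left hwx (sq_nonneg τ)
  have hcoer := mul_le_mul_of_nonneg_left hA hτ
  linarith [sq_norm_sub_sq_norm_le_two_mul_inner_sub_left x y]

theorem sum_range_le_sum_of_succ_sub_add_le {f c d : ℕ → ℝ} {M : ℕ} (h0 : f 0 = 0)
    (hM : 0 ≤ f M) (h : ∀ n < M, f (n + 1) - f n + c n ≤ d n) :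
    ∑ n ∈ range M, c n ≤ ∑ n ∈ range M, d n := by
  have hsum := sum_le_sum fun n hn => h n (mem_range.mp hn)
  rw [sum_add_distrib, sum_range_sub, h0] at hsum
  linarith

theorem sq_mul_sum_le_card_mul_mul_sum_mul_sq {ι : Type*} (s : Finset ι) (τ : ℝ) (x : ι → ℝ) :
    (τ * ∑ i ∈ s, x i) ^ 2 ≤ (#s * τ) * ∑ i ∈ s, τ * x i ^ 2 := by
  have hCS := sq_sum_le_card_mul_sum_sq (s := s) (f := x)
  rw [← mul_sum, mul_pow]
  linarith [mul_le_mul_of_nonneg_left hCS (sq_nonneg τ)]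

theorem le_div_of_mul_sq_le_mul {α c x : ℝ} (hα : 0 < α) (hc : 0 ≤ c) (hx : 0 ≤ x)
    (h : α * x ^ 2 ≤ c * x) : x ≤ c / α := by
  rw [le_div_iff₀ hα]
  rcases hx.eq_or_lt with rfl | hpos
  · simpa using hc
  · nlinarith

theorem backwardEuler_error_L2_estimate_general
    {E : Type*} [NormedAddCommGroup E] [InnerProductSpace ℝ E]
    (N : E → ℝ) (hN : ∀ v : E, ‖v‖ ≤ N v)
    (τ : ℝ) (hτ : 0 < τ) (M : ℕ) (T : ℝ) (hT : T = M * τ)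
    (a : ℕ → E →ₗ[ℝ] E →ₗ[ℝ] ℝ) (αh : ℝ) (hα : 0 < αh)
    (hcoer : ∀ n < M, ∀ v : E, αh * N v ^ 2 ≤ a n v v)
    (W : ℝ) (hW : 0 ≤ W)
    (ρ : ℕ → E) (hρ0 : ρ 0 = 0)
    (w : ℕ → E) (hw : ∀ n < M, ‖w n‖ ≤ W)
    (hrel : ∀ n < M,
      ⟪ρ (n + 1) - ρ n, ρ (n + 1)⟫ - τ ^ 2 / 2 * ⟪w n, ρ (n + 1)⟫
        + τ * a n (ρ (n + 1)) (ρ (n + 1)) = 0) :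
    Real.sqrt (∑ n ∈ Finset.range M, τ * N (ρ (n + 1)) ^ 2)
      ≤ Real.sqrt T / (2 * αh) * τ * W := by
  set S := ∑ n ∈ range M, τ * N (ρ (n + 1)) ^ 2
  have hS : 0 ≤ S := sum_nonneg fun n _ => by positivity
  have henergy : 2 * αh * S ≤ τ * W * (τ * ∑ n ∈ range M, N (ρ (n + 1))) := by
    calc 2 * αh * S = ∑ n ∈ range M, 2 * αh * (τ * N (ρ (n + 1)) ^ 2) := mul_sum ..
      _ ≤ ∑ n ∈ range M, τ ^ 2 * W * N (ρ (n + 1)) :=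
        sum_range_le_sum_of_succ_sub_add_le (f := fun n => ‖ρ n‖ ^ 2) (by simp [hρ0])
          (sq_nonneg _) fun n hn =>
            backwardEuler_step_energy_le hτ.le hW (hN _) (hw n hn) (hcoer n hn _) (hrel n hn)
      _ = τ * W * (τ * ∑ n ∈ range M, N (ρ (n + 1))) := by rw [← mul_sum]; ring
  have hL1 : τ * ∑ n ∈ range M, N (ρ (n + 1)) ≤ Real.sqrt T * Real.sqrt S := by
    rw [← Real.sqrt_mul (hT ▸ by positivity), hT]
    simpa using Real.le_sqrt_of_sq_le (sq_mul_sum_le_card_mul_mul_sum_mul_sq (range M) τ _)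
  have hquad : 2 * αh * Real.sqrt S ^ 2 ≤ τ * W * Real.sqrt T * Real.sqrt S := by
    rw [Real.sq_sqrt hS, mul_assoc (τ * W)]
    exact henergy.trans (mul_le_mul_of_nonneg_left hL1 (by positivity))
  calc Real.sqrt S ≤ τ * W * Real.sqrt T / (2 * αh) :=
        le_div_of_mul_sq_le_mul (by positivity) (by positivity) (Real.sqrt_nonneg S) hquad
    _ = Real.sqrt T / (2 * αh) * τ * W := by ring

/-- Lemma 7.2, second estimate: under the backward Euler error relation, the discrete
`L²(J;V_h)`-norm of the error satisfies `(Σ_{n<M} τ N(ρ_{n+1})²)^{1/2} ≤ (√T/(2α̂)) τ W`. -/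
theorem backwardEuler_error_L2_estimate
    {E : Type*} [NormedAddCommGroup E] [InnerProductSpace ℝ E] [FiniteDimensional ℝ E]
    (N : E → ℝ) (hN : ∀ v : E, ‖v‖ ≤ N v)
    (τ : ℝ) (hτ : 0 < τ) (M : ℕ) (hM : 0 < M) (T : ℝ) (hT : T = M * τ)
    (a : ℕ → E →ₗ[ℝ] E →ₗ[ℝ] ℝ) (αh : ℝ) (hα : 0 < αh)
    (hcoer : ∀ n < M, ∀ v : E, αh * N v ^ 2 ≤ a n v v)
    (W : ℝ) (hW : 0 ≤ W)
    (ρ : ℕ → E) (hρ0 : ρ 0 = 0)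
    (w : ℕ → E) (hw : ∀ n < M, ‖w n‖ ≤ W)
    (hrel : ∀ n < M,
      ⟪ρ (n + 1) - ρ n, ρ (n + 1)⟫ - τ ^ 2 / 2 * ⟪w n, ρ (n + 1)⟫
        + τ * a n (ρ (n + 1)) (ρ (n + 1)) = 0) :
    Real.sqrt (∑ n ∈ Finset.range M, τ * N (ρ (n + 1)) ^ 2)
      ≤ Real.sqrt T / (2 * αh) * τ * W :=
  backwardEuler_error_L2_estimate_general N hN τ hτ M T hT a αh hα hcoer W hW ρ hρ0 w hw hrel
end
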